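/- arXiv:2604.02303 — 2 statements merged into one kernel-verified Lean document; each statement's English description precedes it below -/
import Mathlib

section
/- For any two Boolean networks f, g of dimension n, the following are equivalent: (1) f and g have the same collection of principal trapspaces, i.e. PT(f) = PT(g); (2) f and g have the same collection of trapspaces, i.e. Trapspaces(f) = Trapspaces(g); (3) T_f(x) = T_g(x) for all x ∈ 𝔹^n; (4) TG(f) = TG(g); (5) f^T = g^T. -/
/-!  Common definitions: Boolean networks on `Fin n → Bool`. -/

/-- The update `f^{(S)}` of the coordinates in `S` according to `f`. -/
def upd {n : ℕ} (f : (Fin n → Bool) → Fin n → Bool) (S : Finset (Fin n)) :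
    (Fin n → Bool) → Fin n → Bool :=
  fun x i => if i ∈ S then f x i else x i

/-- `f^{(S,T)} = f^{(T)} ∘ f^{(S)}`. -/
def upd2 {n : ℕ} (f : (Fin n → Bool) → Fin n → Bool) (S T : Finset (Fin n)) :
    (Fin n → Bool) → Fin n → Bool :=
  upd f T ∘ upd f S

/-- `Δ(x,y)`, the set of coordinates where `x` and `y` differ. -/
def delta {n : ℕ} (x y : Fin n → Bool) : Set (Fin n) := {i | x i ≠ y i}

/-- Hamming distance. -/
noncomputable def hdist {n : ℕ} (x y : Fin n → Bool) : ℕ := (delta x y).ncard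

/-- The interval (subcube) `[x,y]`. -/
def interval {n : ℕ} (x y : Fin n → Bool) : Set (Fin n → Bool) :=
  {z | delta x z ⊆ delta x y}

/-- A subcube of `𝔹^n`: fix the coordinates in `S` to `0` and those in `T` to `1`. -/
def IsSubcube {n : ℕ} (X : Set (Fin n → Bool)) : Prop :=
  ∃ S T : Set (Fin n), Disjoint S T ∧
    X = {x | (∀ i ∈ S, x i = false) ∧ (∀ i ∈ T, x i = true)}

/-- The partial order `f ⊑ g` on Boolean networks. -/
def BNle {n : ℕ} (f g : (Fin n → Bool) → Fin n → Bool) : Prop :=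
  ∀ x, delta x (f x) ⊆ delta x (g x)

/-- A trapspace of `f`: an invariant subcube. -/
def IsTrapspace {n : ℕ} (f : (Fin n → Bool) → Fin n → Bool)
    (X : Set (Fin n → Bool)) : Prop :=
  IsSubcube X ∧ ∀ x ∈ X, f x ∈ X

/-- The collection of all trapspaces of `f`. -/
def trapspaces {n : ℕ} (f : (Fin n → Bool) → Fin n → Bool) :
    Set (Set (Fin n → Bool)) :=
  {X | IsTrapspace f X}

/-- The principal trapspace `T_f(x)`: the smallest trapspace of `f` containing `x`. -/
def Tprin {n : ℕ} (f : (Fin n → Bool) → Fin n → Bool) (x : Fin n → Bool) :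
    Set (Fin n → Bool) :=
  ⋂₀ {X | IsTrapspace f X ∧ x ∈ X}

/-- The collection of principal trapspaces of `f`. -/
def PT {n : ℕ} (f : (Fin n → Bool) → Fin n → Bool) : Set (Set (Fin n → Bool)) :=
  {X | ∃ x, X = Tprin f x}

-- The opposite of `x` in a subcube `X` containing `x`: the coordinate `i` is flipped
-- iff some element of `X` differs from `x` there; so `[x, opp X x] = X` when `X` is a
-- subcube containing `x`.
open scoped Classical in
noncomputable def opp {n : ℕ} (X : Set (Fin n → Bool)) (x : Fin n → Bool) :
    Fin n → Bool :=
  fun i => if ∃ y ∈ X, y i ≠ x i then !(x i) else x i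

/-- The trapping closure `f^T`, characterised by `[x, f^T(x)] = T_f(x)`. -/
noncomputable def trapClosure {n : ℕ} (f : (Fin n → Bool) → Fin n → Bool) :
    (Fin n → Bool) → Fin n → Bool :=
  fun x => opp (Tprin f x) x

/-- The general asynchronous graph of `f`, as a relation on `𝔹^n`. -/
def GA {n : ℕ} (f : (Fin n → Bool) → Fin n → Bool) :
    (Fin n → Bool) → (Fin n → Bool) → Prop :=
  fun x y => ∃ S : Finset (Fin n), y = upd f S x

/-- The asynchronous graph of `f`, as a relation on `𝔹^n`. -/
def Agraph {n : ℕ} (f : (Fin n → Bool) → Fin n → Bool) :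
    (Fin n → Bool) → (Fin n → Bool) → Prop :=
  fun x y => ∃ i : Fin n, y = upd f {i} x

/-- The trapping graph of `f`: an edge `(x,y)` iff `y ∈ T_f(x)`. -/
def TG {n : ℕ} (f : (Fin n → Bool) → Fin n → Bool) :
    (Fin n → Bool) → (Fin n → Bool) → Prop :=
  fun x y => y ∈ Tprin f x

/-- A network is trapping if its general asynchronous graph is transitive. -/
def IsTrapping {n : ℕ} (f : (Fin n → Bool) → Fin n → Bool) : Prop :=
  Transitive (GA f)

/-- A commutative Boolean network: `f^{(i,j)} = f^{(j,i)}` for all `i,j`. -/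
def IsCommutative' {n : ℕ} (f : (Fin n → Bool) → Fin n → Bool) : Prop :=
  ∀ i j : Fin n, upd2 f {i} {j} = upd2 f {j} {i}

/-- `𝒜(x)`: the intersection of all members of `𝒜` containing `x`
(`= 𝔹^n` if no member contains `x`, since `⋂₀ ∅ = univ`). -/
def collAt {n : ℕ} (𝒜 : Set (Set (Fin n → Bool))) (x : Fin n → Bool) :
    Set (Fin n → Bool) :=
  ⋂₀ {A ∈ 𝒜 | x ∈ A}

/-- The network `F(𝒜)`, characterised by `[x, F(𝒜)(x)] = 𝒜(x)`. -/
noncomputable def Fnet {n : ℕ} (𝒜 : Set (Set (Fin n → Bool))) :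
    (Fin n → Bool) → Fin n → Bool :=
  fun x => opp (collAt 𝒜 x) x

/-- A collection of subcubes is pre-principal if `𝒬 = {𝒬(x) : x ∈ 𝔹^n}`. -/
def PrePrincipal {n : ℕ} (𝒬 : Set (Set (Fin n → Bool))) : Prop :=
  𝒬 = {X | ∃ x, X = collAt 𝒬 x}

/-- `λ(𝒜)`: unions of subcollections of `𝒜` that are subcubes. -/
def lamColl {n : ℕ} (𝒜 : Set (Set (Fin n → Bool))) : Set (Set (Fin n → Bool)) :=
  {X | ∃ ℛ ⊆ 𝒜, X = ⋃₀ ℛ ∧ IsSubcube X}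

/-- `μ(𝒜) = {𝒜(x) : x ∈ 𝔹^n}`. -/
def muColl {n : ℕ} (𝒜 : Set (Set (Fin n → Bool))) : Set (Set (Fin n → Bool)) :=
  {X | ∃ x, X = collAt 𝒜 x}

/-- A pre-ideal collection of subcubes. -/
def PreIdeal {n : ℕ} (𝒥 : Set (Set (Fin n → Bool))) : Prop :=
  Set.univ ∈ 𝒥 ∧
  (∀ A ∈ 𝒥, ∀ B ∈ 𝒥, (A ∩ B).Nonempty → A ∩ B ∈ 𝒥) ∧
  (∀ ℛ ⊆ 𝒥, IsSubcube (⋃₀ ℛ) → ⋃₀ ℛ ∈ 𝒥)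

/-- The collection of minimal trapspaces of `f`. -/
def MT {n : ℕ} (f : (Fin n → Bool) → Fin n → Bool) : Set (Set (Fin n → Bool)) :=
  {X | IsTrapspace f X ∧ ∀ Y, IsTrapspace f Y → ¬ Y ⊂ X}

/-- `M(f)`: the union of the minimal trapspaces of `f`. -/
def Mset {n : ℕ} (f : (Fin n → Bool) → Fin n → Bool) : Set (Fin n → Bool) :=
  ⋃₀ MT f

-- The min-trapping extension `f^M`: `[x, f^M(x)] = T_f(x)` if `x ∈ M(f)`,
-- and `f^M(x) = ¬x` otherwise.
open scoped Classical in
noncomputable def minExt {n : ℕ} (f : (Fin n → Bool) → Fin n → Bool) :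
    (Fin n → Bool) → Fin n → Bool :=
  fun x => if x ∈ Mset f then opp (Tprin f x) x else fun i => !(x i)

/-!
A subcube through `x` is the interval `[x, y]`, where `y` flips exactly the coordinates that
vary on it; so subcubes through a common point are closed under intersection and `T_f(x)` is a
trapspace. Each of the five data then determines, and is determined by, the map `x ↦ T_f(x)`:
`T_f(x)` is the intersection of the principal trapspaces containing `x`, a subcube is a
trapspace iff it contains `T_f(y)` for each of its points `y`, `TG f` is `T_f` read as a
relation, and `T_f(x) = [x, f^T(x)]`.
-/

section Subcube

variable {n : ℕ}

lemma setOf_delta_subset_eq (x : Fin n → Bool) (K : Set (Fin n)) :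
    {z | delta x z ⊆ K} = {z | ∀ i ∉ K, z i = x i} := by
  ext z
  simp only [Set.mem_ofPred_eq, Set.subset_def, delta]
  exact forall_congr' fun i => by tauto

lemma isSubcube_setOf_delta_subset (x : Fin n → Bool) (K : Set (Fin n)) :
    IsSubcube {z | delta x z ⊆ K} := by
  refine ⟨{i | i ∉ K ∧ x i = false}, {i | i ∉ K ∧ x i = true},
    Set.disjoint_left.2 fun i h₀ h₁ => by simp_all, ?_⟩
  rw [setOf_delta_subset_eq]
  ext z
  simp only [Set.mem_ofPred_eq, and_imp]
  refine ⟨fun h => ⟨fun i hi hx => hx ▸ h i hi, fun i hi hx => hx ▸ h i hi⟩, ?_⟩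
  rintro ⟨h₀, h₁⟩ i hi
  cases hx : x i
  exacts [h₀ i hi hx, h₁ i hi hx]

lemma IsSubcube.exists_eq_setOf_delta_subset {X : Set (Fin n → Bool)} {x : Fin n → Bool}
    (hX : IsSubcube X) (hx : x ∈ X) : ∃ K : Set (Fin n), X = {z | delta x z ⊆ K} := by
  obtain ⟨S, T, -, rfl⟩ := hX
  obtain ⟨hxS, hxT⟩ := hx
  refine ⟨(S ∪ T)ᶜ, ?_⟩
  rw [setOf_delta_subset_eq]
  ext z
  simp only [Set.mem_ofPred_eq, Set.mem_compl_iff, not_not, Set.mem_union]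
  refine ⟨fun ⟨h₀, h₁⟩ i hi => ?_, fun h => ⟨fun i hi => ?_, fun i hi => ?_⟩⟩
  · rcases hi with hi | hi
    · rw [h₀ i hi, hxS i hi]
    · rw [h₁ i hi, hxT i hi]
  · rw [h i (.inl hi), hxS i hi]
  · rw [h i (.inr hi), hxT i hi]

lemma delta_opp (X : Set (Fin n → Bool)) (x : Fin n → Bool) :
    delta x (opp X x) = {i | ∃ y ∈ X, y i ≠ x i} := by
  ext i
  by_cases h : ∃ y ∈ X, y i ≠ x i <;> simp [delta, opp, h]

lemma IsSubcube.eq_interval_opp {X : Set (Fin n → Bool)} {x : Fin n → Bool}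
    (hX : IsSubcube X) (hx : x ∈ X) : X = interval x (opp X x) := by
  obtain ⟨K, rfl⟩ := hX.exists_eq_setOf_delta_subset hx
  suffices delta x (opp {z | delta x z ⊆ K} x) = K by rw [interval, this]
  rw [delta_opp]
  refine subset_antisymm (fun i ⟨y, hy, hyi⟩ => hy (Ne.symm hyi)) fun i hi => ?_
  refine ⟨Function.update x i (!x i), fun j hj => ?_, by simp⟩
  rcases eq_or_ne j i with rfl | hji
  · exact hi
  · simp [delta, hji] at hj

lemma isSubcube_sInter {𝒜 : Set (Set (Fin n → Bool))} {x : Fin n → Bool}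
    (h𝒜 : ∀ A ∈ 𝒜, IsSubcube A ∧ x ∈ A) : IsSubcube (⋂₀ 𝒜) := by
  suffices ⋂₀ 𝒜 = {z | delta x z ⊆ ⋂ A ∈ 𝒜, delta x (opp A x)} by
    rw [this]; exact isSubcube_setOf_delta_subset x _
  ext z
  simp only [Set.mem_sInter, Set.mem_ofPred_eq, Set.subset_iInter_iff]
  refine forall₂_congr fun A hA => ?_
  conv_lhs => rw [(h𝒜 A hA).1.eq_interval_opp (h𝒜 A hA).2]
  rfl

end Subcube

section Trapspace

variable {n : ℕ} (f : (Fin n → Bool) → Fin n → Bool)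

lemma mem_Tprin_self (x : Fin n → Bool) : x ∈ Tprin f x :=
  Set.mem_sInter.2 fun _ hX => hX.2

variable {f} in
lemma Tprin_subset {X : Set (Fin n → Bool)} {x : Fin n → Bool}
    (hX : IsTrapspace f X) (hx : x ∈ X) : Tprin f x ⊆ X :=
  Set.sInter_subset_of_mem ⟨hX, hx⟩

lemma isTrapspace_Tprin (x : Fin n → Bool) : IsTrapspace f (Tprin f x) :=
  ⟨isSubcube_sInter fun _ hX => ⟨hX.1.1, hX.2⟩,
    fun _ hy X hX => hX.1.2 _ (Set.mem_sInter.1 hy X hX)⟩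

lemma isTrapspace_iff_forall_Tprin_subset {X : Set (Fin n → Bool)} :
    IsTrapspace f X ↔ IsSubcube X ∧ ∀ x ∈ X, Tprin f x ⊆ X :=
  ⟨fun hX => ⟨hX.1, fun _ => Tprin_subset hX⟩, fun ⟨hX, hT⟩ =>
    ⟨hX, fun x hx => hT x hx ((isTrapspace_Tprin f x).2 x (mem_Tprin_self f x))⟩⟩

lemma Tprin_eq_interval_trapClosure (x : Fin n → Bool) :
    Tprin f x = interval x (trapClosure f x) :=
  (isTrapspace_Tprin f x).1.eq_interval_opp (mem_Tprin_self f x)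

lemma Tprin_eq_sInter_PT (x : Fin n → Bool) : Tprin f x = ⋂₀ {X ∈ PT f | x ∈ X} := by
  refine subset_antisymm (fun z hz X ⟨⟨y, hXy⟩, hxX⟩ => ?_)
    (Set.sInter_subset_of_mem ⟨⟨x, rfl⟩, mem_Tprin_self f x⟩)
  subst hXy
  exact Tprin_subset (isTrapspace_Tprin f y) hxX hz

end Trapspace

/-- trapspace-equivalent networks. -/
theorem stmt3 (n : ℕ) (f g : (Fin n → Bool) → Fin n → Bool) :
    List.TFAE [
      PT f = PT g,
      trapspaces f = trapspaces g,
      ∀ x : Fin n → Bool, Tprin f x = Tprin g x,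
      TG f = TG g,
      trapClosure f = trapClosure g
    ] := by
  tfae_have 1 → 3 := fun h x => by rw [Tprin_eq_sInter_PT, Tprin_eq_sInter_PT, h]
  tfae_have 3 → 1 := fun h => by simp only [PT, funext h]
  tfae_have 2 → 3 := fun h x => by
    have hfg (X : Set (Fin n → Bool)) : IsTrapspace f X ↔ IsTrapspace g X := Set.ext_iff.1 h X
    simp only [Tprin, hfg]
  tfae_have 3 → 2 := fun h => by
    ext X
    simp only [trapspaces, Set.mem_ofPred_eq, isTrapspace_iff_forall_Tprin_subset, h]
  -- `TG f x` and `Tprin f x` are the same predicate on `𝔹^n`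
  tfae_have 3 ↔ 4 := funext_iff.symm
  tfae_have 3 → 5 := fun h => funext fun x => congrArg (opp · x) (h x)
  tfae_have 5 → 3 := fun h x => by
    rw [Tprin_eq_interval_trapClosure, Tprin_eq_interval_trapClosure, h]
  tfae_finish
end

section
/- A collection of subcubes of 𝔹^n is the collection of trapspaces of some Boolean network of dimension n if and only if it is pre-ideal. Moreover, for every pre-ideal collection 𝒥 of subcubes of 𝔹^n, F(𝒥) is a trapping network with Trapspaces(F(𝒥)) = 𝒥, and for every trapping Boolean network g of dimension n, F(Trapspaces(g)) = g. -/
/-!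
A subcube `X` containing `x` is the interval `[x, opp X x]`, so a network is determined by
the intervals `[x, f x]`, and `X` is a trapspace of `f` iff it is a subcube with
`[x, f x] ⊆ X` for all `x ∈ X`. For a pre-ideal `𝒥`, closure under nonempty intersections
puts `𝒥(x)` in `𝒥`, so `[x, F(𝒥) x] = 𝒥(x)`; the trapspaces of `F(𝒥)` are then the subcubes
that are unions of sets `𝒥(x)`, which are exactly the members of `𝒥` by closure under
subcube unions. A network `g` is trapping iff every `[x, g x]` is a trapspace, and then
`[x, g x]` is the smallest trapspace containing `x`, so `F(Trapspaces(g))` recovers `g`.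
-/

section Subcube

variable {n : ℕ}

lemma mem_interval_iff {x y z : Fin n → Bool} :
    z ∈ interval x y ↔ ∀ i, x i = y i → z i = x i := by
  refine forall_congr' fun i => ?_
  simp only [delta, Set.mem_ofPred_eq]
  constructor
  · intro h hxy
    by_contra hz
    exact h (Ne.symm hz) hxy
  · intro h hxz hxy
    exact hxz (h hxy).symm

lemma left_mem_interval (x y : Fin n → Bool) : x ∈ interval x y :=
  fun _ h => absurd rfl h

lemma right_mem_interval (x y : Fin n → Bool) : y ∈ interval x y :=
  fun _ h => h

lemma isSubcube_interval (x y : Fin n → Bool) : IsSubcube (interval x y) := by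
  refine ⟨{i | x i = false ∧ y i = false}, {i | x i = true ∧ y i = true}, ?_, ?_⟩
  · rw [Set.disjoint_left]
    rintro i ⟨hx, -⟩ ⟨hx', -⟩
    simp [hx] at hx'
  · ext z
    rw [mem_interval_iff]
    constructor
    · intro h
      exact ⟨fun i hi => (h i (hi.1.trans hi.2.symm)).trans hi.1,
        fun i hi => (h i (hi.1.trans hi.2.symm)).trans hi.1⟩
    · rintro ⟨hS, hT⟩ i hxy
      cases hx : x i
      · exact hS i ⟨hx, hxy ▸ hx⟩
      · exact hT i ⟨hx, hxy ▸ hx⟩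

lemma IsSubcube.interval_subset {X : Set (Fin n → Bool)} (hX : IsSubcube X)
    {x y : Fin n → Bool} (hx : x ∈ X) (hy : y ∈ X) : interval x y ⊆ X := by
  obtain ⟨S, T, -, rfl⟩ := hX
  intro z hz
  rw [mem_interval_iff] at hz
  exact ⟨fun i hi => (hz i ((hx.1 i hi).trans (hy.1 i hi).symm)).trans (hx.1 i hi),
    fun i hi => (hz i ((hx.2 i hi).trans (hy.2 i hi).symm)).trans (hx.2 i hi)⟩

lemma IsSubcube.inter {A B : Set (Fin n → Bool)} (hA : IsSubcube A) (hB : IsSubcube B)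
    (hAB : (A ∩ B).Nonempty) : IsSubcube (A ∩ B) := by
  obtain ⟨S₁, T₁, -, rfl⟩ := hA
  obtain ⟨S₂, T₂, -, rfl⟩ := hB
  obtain ⟨w, ⟨hwS₁, hwT₁⟩, ⟨hwS₂, hwT₂⟩⟩ := hAB
  have hwS : ∀ i ∈ S₁ ∪ S₂, w i = false := fun i hi => hi.elim (hwS₁ i) (hwS₂ i)
  have hwT : ∀ i ∈ T₁ ∪ T₂, w i = true := fun i hi => hi.elim (hwT₁ i) (hwT₂ i)
  refine ⟨S₁ ∪ S₂, T₁ ∪ T₂, Set.disjoint_left.mpr fun i hS hT => ?_, ?_⟩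
  · exact Bool.false_ne_true ((hwS i hS).symm.trans (hwT i hT))
  · ext z
    simp only [Set.mem_inter_iff, Set.mem_ofPred_eq, Set.mem_union, or_imp, forall_and]
    tauto

lemma opp_apply_eq_self_iff {X : Set (Fin n → Bool)} {x : Fin n → Bool} {i : Fin n} :
    opp X x i = x i ↔ ∀ y ∈ X, y i = x i := by
  unfold opp
  split_ifs with h
  · simpa using h
  · simpa using h

lemma opp_interval (x y : Fin n → Bool) : opp (interval x y) x = y := by
  funext i
  by_cases hxy : x i = y i
  · rw [← hxy, opp_apply_eq_self_iff]
    exact fun z hz => mem_interval_iff.mp hz i hxy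
  · have hopp : opp (interval x y) x i ≠ x i := fun h =>
      hxy (opp_apply_eq_self_iff.mp h y (right_mem_interval x y)).symm
    revert hxy hopp
    cases x i <;> cases y i <;> cases opp (interval x y) x i <;> simp

lemma IsSubcube.interval_opp {X : Set (Fin n → Bool)} (hX : IsSubcube X) {x : Fin n → Bool}
    (hx : x ∈ X) : interval x (opp X x) = X := by
  refine subset_antisymm ?_ fun z hz => mem_interval_iff.mpr fun i hi =>
    opp_apply_eq_self_iff.mp hi.symm z hz
  obtain ⟨S, T, -, rfl⟩ := hX
  intro z hz
  rw [mem_interval_iff] at hz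
  refine ⟨fun i hi => ?_, fun i hi => ?_⟩
  · rw [hz i (opp_apply_eq_self_iff.mpr fun y hy => (hy.1 i hi).trans (hx.1 i hi).symm).symm]
    exact hx.1 i hi
  · rw [hz i (opp_apply_eq_self_iff.mpr fun y hy => (hy.2 i hi).trans (hx.2 i hi).symm).symm]
    exact hx.2 i hi

end Subcube

section Network

variable {n : ℕ} {f : (Fin n → Bool) → Fin n → Bool}

lemma mem_collAt_self (𝒜 : Set (Set (Fin n → Bool))) (x : Fin n → Bool) :
    x ∈ collAt 𝒜 x :=
  fun _ hA => hA.2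

lemma collAt_subset {𝒜 : Set (Set (Fin n → Bool))} {A : Set (Fin n → Bool)} (hA : A ∈ 𝒜)
    {x : Fin n → Bool} (hx : x ∈ A) : collAt 𝒜 x ⊆ A :=
  Set.sInter_subset_of_mem ⟨hA, hx⟩

lemma ga_iff_mem_interval {x y : Fin n → Bool} : GA f x y ↔ y ∈ interval x (f x) := by
  constructor
  · rintro ⟨S, rfl⟩ i (hi : x i ≠ if i ∈ S then f x i else x i)
    split_ifs at hi
    · exact hi
    · exact absurd rfl hi
  · intro h
    classical
    refine ⟨Finset.univ.filter fun i => x i ≠ y i, funext fun i => ?_⟩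
    by_cases hxy : x i = y i
    · simp [upd, hxy]
    · have hxf : x i ≠ f x i := h hxy
      simp only [upd, Finset.mem_filter, Finset.mem_univ, true_and, if_pos hxy]
      revert hxy hxf
      cases x i <;> cases y i <;> cases f x i <;> simp

lemma isTrapspace_iff_interval_subset {X : Set (Fin n → Bool)} :
    IsTrapspace f X ↔ IsSubcube X ∧ ∀ x ∈ X, interval x (f x) ⊆ X :=
  and_congr_right fun hX =>
    ⟨fun hf x hx => hX.interval_subset hx (hf x hx),
      fun hf x hx => hf x hx (right_mem_interval x (f x))⟩

lemma isTrapping_iff_isTrapspace_interval :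
    IsTrapping f ↔ ∀ x, IsTrapspace f (interval x (f x)) := by
  simp only [isTrapspace_iff_interval_subset, isSubcube_interval, true_and]
  constructor
  · intro hf x y hy z hz
    exact ga_iff_mem_interval.mp (hf (ga_iff_mem_interval.mpr hy) (ga_iff_mem_interval.mpr hz))
  · intro hf x y z hxy hyz
    rw [ga_iff_mem_interval] at hxy hyz ⊢
    exact hf x y hxy hyz

lemma preIdeal_trapspaces (f : (Fin n → Bool) → Fin n → Bool) : PreIdeal (trapspaces f) := by
  refine ⟨⟨⟨∅, ∅, by simp, by ext; simp⟩, fun _ _ => trivial⟩, ?_, ?_⟩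
  · rintro A ⟨hA, hfA⟩ B ⟨hB, hfB⟩ hAB
    exact ⟨hA.inter hB hAB, fun x hx => ⟨hfA x hx.1, hfB x hx.2⟩⟩
  · rintro ℛ hℛ hcube
    exact ⟨hcube, fun x ⟨R, hR, hxR⟩ => ⟨R, hR, (hℛ hR).2 x hxR⟩⟩

lemma IsTrapping.collAt_trapspaces (hf : IsTrapping f) (x : Fin n → Bool) :
    collAt (trapspaces f) x = interval x (f x) := by
  refine subset_antisymm
    (collAt_subset (isTrapping_iff_isTrapspace_interval.mp hf x) (left_mem_interval x (f x))) ?_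
  rintro z hz A ⟨hA, hxA⟩
  exact (isTrapspace_iff_interval_subset.mp hA).2 x hxA hz

lemma IsTrapping.fnet_trapspaces (hf : IsTrapping f) : Fnet (trapspaces f) = f :=
  funext fun x => by rw [Fnet, hf.collAt_trapspaces, opp_interval]

end Network

section PreIdeal

variable {n : ℕ} {𝒥 : Set (Set (Fin n → Bool))}

lemma PreIdeal.sInter_mem (h : PreIdeal 𝒥) {x : Fin n → Bool} {𝒮 : Set (Set (Fin n → Bool))}
    (h𝒮 : 𝒮.Finite) (h𝒮𝒥 : 𝒮 ⊆ 𝒥) (hx : ∀ A ∈ 𝒮, x ∈ A) : ⋂₀ 𝒮 ∈ 𝒥 := by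
  induction 𝒮, h𝒮 using Set.Finite.induction_on with
  | empty => simpa using h.1
  | @insert A 𝒮 _ _ ih =>
    rw [Set.sInter_insert]
    have hA := Set.insert_subset_iff.mp h𝒮𝒥
    refine h.2.1 A hA.1 _ (ih hA.2 fun B hB => hx B (.inr hB)) ⟨x, hx A (.inl rfl), ?_⟩
    exact Set.mem_sInter.mpr fun B hB => hx B (.inr hB)

lemma PreIdeal.collAt_mem (h : PreIdeal 𝒥) (x : Fin n → Bool) : collAt 𝒥 x ∈ 𝒥 :=
  h.sInter_mem (Set.toFinite _) (fun _ hA => hA.1) fun _ hA => hA.2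

lemma PreIdeal.mem_iff (h : PreIdeal 𝒥) (h𝒥 : ∀ A ∈ 𝒥, IsSubcube A) {X : Set (Fin n → Bool)} :
    X ∈ 𝒥 ↔ IsSubcube X ∧ ∀ x ∈ X, collAt 𝒥 x ⊆ X := by
  refine ⟨fun hX => ⟨h𝒥 X hX, fun x => collAt_subset hX⟩, fun ⟨hX, hsub⟩ => ?_⟩
  have hunion : ⋃₀ (collAt 𝒥 '' X) = X := by
    refine subset_antisymm ?_ fun x hx => ⟨_, ⟨x, hx, rfl⟩, mem_collAt_self 𝒥 x⟩
    rintro z ⟨_, ⟨x, hx, rfl⟩, hz⟩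
    exact hsub x hx hz
  have hmem := h.2.2 _ (Set.image_subset_iff.mpr fun x _ => h.collAt_mem x) (hunion ▸ hX)
  rwa [hunion] at hmem

lemma PreIdeal.interval_fnet (h : PreIdeal 𝒥) (h𝒥 : ∀ A ∈ 𝒥, IsSubcube A)
    (x : Fin n → Bool) : interval x (Fnet 𝒥 x) = collAt 𝒥 x :=
  (h𝒥 _ (h.collAt_mem x)).interval_opp (mem_collAt_self 𝒥 x)

lemma PreIdeal.trapspaces_fnet (h : PreIdeal 𝒥) (h𝒥 : ∀ A ∈ 𝒥, IsSubcube A) :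
    trapspaces (Fnet 𝒥) = 𝒥 := by
  ext X
  simp only [trapspaces, Set.mem_ofPred_eq, isTrapspace_iff_interval_subset,
    h.interval_fnet h𝒥, h.mem_iff h𝒥]

lemma PreIdeal.isTrapping_fnet (h : PreIdeal 𝒥) (h𝒥 : ∀ A ∈ 𝒥, IsSubcube A) :
    IsTrapping (Fnet 𝒥) := by
  refine isTrapping_iff_isTrapspace_interval.mpr fun x => ?_
  change interval x (Fnet 𝒥 x) ∈ trapspaces (Fnet 𝒥)
  rw [h.trapspaces_fnet h𝒥, h.interval_fnet h𝒥]
  exact h.collAt_mem x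

end PreIdeal

/-- the collections of trapspaces are exactly the pre-ideal collections
of subcubes; `F` and `Trapspaces` are mutually inverse between pre-ideal collections
and trapping networks. -/
theorem stmt6 (n : ℕ) (𝒥 : Set (Set (Fin n → Bool))) (h𝒥 : ∀ A ∈ 𝒥, IsSubcube A) :
    ((∃ f : (Fin n → Bool) → Fin n → Bool, trapspaces f = 𝒥) ↔ PreIdeal 𝒥) ∧
    (PreIdeal 𝒥 → IsTrapping (Fnet 𝒥) ∧ trapspaces (Fnet 𝒥) = 𝒥) ∧
    (∀ g : (Fin n → Bool) → Fin n → Bool, IsTrapping g → Fnet (trapspaces g) = g) := by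
  refine ⟨⟨?_, fun h => ⟨Fnet 𝒥, h.trapspaces_fnet h𝒥⟩⟩,
    fun h => ⟨h.isTrapping_fnet h𝒥, h.trapspaces_fnet h𝒥⟩, fun g hg => hg.fnet_trapspaces⟩
  rintro ⟨f, rfl⟩
  exact preIdeal_trapspaces f
end
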